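/- Fix real parameters α, β, γ with α ≠ 0. Let J(x,y,z) be the 3×3 skew-symmetric matrix with J₁₂ = z, J₁₃ = −y(1 + z/(2α)), J₂₃ = 0, and let R(x,y,z) = (1/α) times the symmetric matrix with entries R₁₁ = α², R₁₂ = 0, R₁₃ = yz/2, R₂₂ = 0, R₂₃ = γy, R₃₃ = −βz (the Poisson and resistance matrices of the modified Lü system). Then the matrix N = JR + RJ, identified with the vector field N(x,y,z) = (N₃₂, N₁₃, N₂₁), fails the Jacobi identity: there exists a point p ∈ ℝ³ (e.g. p = (0,0,1)) at which N(p)·(∇×N)(p) ≠ 0. -/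

import Mathlib

set_option linter.unusedVariables false

open Matrix

/-- Partial derivative with respect to the first variable. -/
noncomputable def pd1 (f : ℝ → ℝ → ℝ → ℝ) (x y z : ℝ) : ℝ := deriv (fun t => f t y z) x
/-- Partial derivative with respect to the second variable. -/
noncomputable def pd2 (f : ℝ → ℝ → ℝ → ℝ) (x y z : ℝ) : ℝ := deriv (fun t => f x t z) y
/-- Partial derivative with respect to the third variable. -/
noncomputable def pd3 (f : ℝ → ℝ → ℝ → ℝ) (x y z : ℝ) : ℝ := deriv (fun t => f x y t) z

/-- Poisson matrix of the modified Lü system. -/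
noncomputable def Jmat (α : ℝ) (x y z : ℝ) : Matrix (Fin 3) (Fin 3) ℝ :=
  !![0, z, -y * (1 + z / (2 * α)); -z, 0, 0; y * (1 + z / (2 * α)), 0, 0]

/-- Resistance matrix of the modified Lü system. -/
noncomputable def Rmat (α β γ : ℝ) (x y z : ℝ) : Matrix (Fin 3) (Fin 3) ℝ :=
  (1 / α) • !![α ^ 2, 0, y * z / 2; 0, 0, γ * y; y * z / 2, γ * y, -β * z]

/-- `N = JR + RJ`. -/
noncomputable def Nmat (α β γ : ℝ) (x y z : ℝ) : Matrix (Fin 3) (Fin 3) ℝ :=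
  Jmat α x y z * Rmat α β γ x y z + Rmat α β γ x y z * Jmat α x y z

/-- First component of the vector field associated to `N`: `N₃₂`. -/
noncomputable def N1 (α β γ : ℝ) (x y z : ℝ) : ℝ := Nmat α β γ x y z 2 1
/-- Second component: `N₁₃`. -/
noncomputable def N2 (α β γ : ℝ) (x y z : ℝ) : ℝ := Nmat α β γ x y z 0 2
/-- Third component: `N₂₁`. -/
noncomputable def N3 (α β γ : ℝ) (x y z : ℝ) : ℝ := Nmat α β γ x y z 1 0

/-- For the modified Lü system (`α ≠ 0`), the matrix `N = JR + RJ` fails the Jacobi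
identity: there is a point of `ℝ³` at which `N·(∇×N) ≠ 0`. -/
theorem stmt_5 (α β γ : ℝ) (hα : α ≠ 0) :
    ∃ x y z : ℝ,
      N1 α β γ x y z * (pd2 (N3 α β γ) x y z - pd3 (N2 α β γ) x y z)
        + N2 α β γ x y z * (pd3 (N1 α β γ) x y z - pd1 (N3 α β γ) x y z)
        + N3 α β γ x y z * (pd1 (N2 α β γ) x y z - pd2 (N1 α β γ) x y z) ≠ 0 := by
  refine ⟨0, 0, 1, ?_⟩
  have SIMP : ∀ x y z : ℝ,
      N1 α β γ x y z = y * z ^ 2 / (2 * α) ∧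
      N2 α β γ x y z = y * ((γ * z + β * z * (1 + z / (2 * α))) / α - α * (1 + z / (2 * α))) ∧
      N3 α β γ x y z = -(z * α) + γ * y ^ 2 * (1 + z / (2 * α)) / α := by
    intro x y z
    refine ⟨?_, ?_, ?_⟩ <;>
    · simp [N1, N2, N3, Nmat, Jmat, Rmat, Matrix.mul_apply, Fin.sum_univ_three,
        Matrix.vecHead, Matrix.vecTail]
      field_simp
      all_goals ring
  have hN1 : N1 α β γ 0 0 1 = 0 := by rw [(SIMP 0 0 1).1]; ring
  have hN2 : N2 α β γ 0 0 1 = 0 := by rw [(SIMP 0 0 1).2.1]; ring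
  have hN3 : N3 α β γ 0 0 1 = -α := by rw [(SIMP 0 0 1).2.2]; ring
  have hpd1N2 : pd1 (N2 α β γ) 0 0 1 = 0 := by
    have : (fun t => N2 α β γ t 0 1) = fun _ => (0 : ℝ) := by
      funext t; rw [(SIMP t 0 1).2.1]; ring
    rw [pd1, this, deriv_const]
  have hpd2N1 : pd2 (N1 α β γ) 0 0 1 = 1 / (2 * α) := by
    have : (fun t => N1 α β γ 0 t 1) = fun t => t * (1 / (2 * α)) := by
      funext t; rw [(SIMP 0 t 1).1]; ring
    rw [pd2, this]
    simp
  rw [hN1, hN2, hN3, hpd1N2, hpd2N1]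
  have h2α : (2 : ℝ) * α ≠ 0 := by positivity
  field_simp

  norm_num
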